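/- Let p₁, p₂, p₃ ∈ ℝ³ be jointly active pursuers whose projections p̄₁, p̄₂, p̄₃ onto T are not collinear, let c be the unique point of T with ‖c − p₁‖ = ‖c − p₂‖ = ‖c − p₃‖, let r = ‖p₁ − c‖, and let S be the convex hull of {p̄₁, p̄₂, p̄₃} in T. Let e ∈ ℝ³ with e₃ > 0, e ∉ {p₁, p₂, p₃}. Then (there exists t ∈ T with ‖t − e‖ < min(‖t − p₁‖, ‖t − p₂‖, ‖t − p₃‖)) if and only if (‖e − c‖ < r or (e₁, e₂, 0) ∉ S). (Theorem 3: the evader winning subspace for three noncollinear-projection active pursuers is the complement in the play half-space of the barrier and the pursuer winning subspace.) -/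

import Mathlib

noncomputable section

/-- The point of `ℝ³` with the given three coordinates. -/
def mk3 (x y z : ℝ) : EuclideanSpace ℝ (Fin 3) :=
  (WithLp.equiv 2 (Fin 3 → ℝ)).symm ![x, y, z]

/-- The projection of a point onto the target plane `T = {z | z₃ = 0}`. -/
def projT (p : EuclideanSpace ℝ (Fin 3)) : EuclideanSpace ℝ (Fin 3) :=
  mk3 (p 0) (p 1) 0

/-- The mirror of a point across the target plane `T = {z | z₃ = 0}`. -/
def mirrorT (p : EuclideanSpace ℝ (Fin 3)) : EuclideanSpace ℝ (Fin 3) :=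
  mk3 (p 0) (p 1) (-(p 2))

/-- `c` is the simultaneous-arrival point `c_{a,b}`: the (unique) point of the target
plane on the line through the projections of `a` and `b` that is equidistant from
`a` and `b`. -/
def IsCab (a b c : EuclideanSpace ℝ (Fin 3)) : Prop :=
  c 2 = 0 ∧ (∃ u : ℝ, c = projT a + u • (projT b - projT a)) ∧ ‖c - a‖ = ‖c - b‖

/-- Membership in the pursuer winning subspace `W_P^{a,b}` of the pair `{a, b}`, given the
simultaneous-arrival point `c = c_{a,b}`. -/
def memWP (a b c z : EuclideanSpace ℝ (Fin 3)) : Prop :=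
  z 2 > 0 ∧
  (∃ β : ℝ, 0 ≤ β ∧ β ≤ 1 ∧
    z 0 = β * a 0 + (1 - β) * b 0 ∧ z 1 = β * a 1 + (1 - β) * b 1) ∧
  ‖z - c‖ > ‖a - c‖

/-- Three pursuers are jointly active: for every pair `i ≠ j` their horizontal projections
differ, and neither the remaining pursuer `p_k` nor its mirror across the target plane lies
in the pursuer winning subspace `W_P^{p_i,p_j}` of the pair. -/
def JointlyActive (p : Fin 3 → EuclideanSpace ℝ (Fin 3)) : Prop :=
  ∀ i j k : Fin 3, i ≠ j → k ≠ i → k ≠ j →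
    (p i 0, p i 1) ≠ (p j 0, p j 1) ∧
    ∀ c : EuclideanSpace ℝ (Fin 3), IsCab (p i) (p j) c →
      ¬memWP (p i) (p j) c (p k) ∧ ¬memWP (p i) (p j) c (mirrorT (p k))

/-!
For `t` in the target plane, the margin `‖t - p‖² - ‖t - e‖²` of a pursuer `p` over the
evader is affine in `t`, with slope `2 (ē - p̄)` that sees only the projections, and equals
`r² - ‖c - e‖²` at `t = c` for every pursuer. If `ē` is a convex combination of the `p̄ᵢ`, the
same combination of the margins is therefore constant, equal to `r² - ‖c - e‖²`, so when
`‖e - c‖ ≥ r` some pursuer has a nonpositive margin at every `t`. Conversely, inside the sphere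
`t = c` wins for the evader, and if `ē` lies outside the triangle, moving `t` far along a
direction separating `ē` from it makes every margin positive.
-/

open Filter Set
open scoped RealInnerProductSpace

section

variable {E : Type*} [NormedAddCommGroup E] [InnerProductSpace ℝ E]

theorem norm_sub_sq_sub_norm_sub_sq (t c p e : E) :
    ‖t - p‖ ^ 2 - ‖t - e‖ ^ 2 = ‖p - c‖ ^ 2 - ‖e - c‖ ^ 2 + 2 * ⟪t - c, e - p⟫ := by
  rw [show t - p = (t - c) - (p - c) by abel, show t - e = (t - c) - (e - c) by abel,
    show e - p = (e - c) - (p - c) by abel, norm_sub_sq_real (t - c) (p - c),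
    norm_sub_sq_real (t - c) (e - c), inner_sub_right (t - c) (e - c) (p - c)]
  ring

theorem Convex.exists_mem_forall_inner_lt_of_notMem {C : Set E} (hC : Convex ℝ C)
    (hCc : IsComplete C) (hCn : C.Nonempty) {x : E} (hx : x ∉ C) :
    ∃ q ∈ C, ∀ y ∈ C, ⟪x - q, y⟫ < ⟪x - q, x⟫ := by
  obtain ⟨q, hq, hmin⟩ := exists_norm_eq_iInf_of_complete_convex hCn hCc hC x
  refine ⟨q, hq, fun y hy => ?_⟩
  have hobtuse := (norm_eq_iInf_iff_real_inner_le_zero hC hq).1 hmin y hy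
  have hgap : 0 < ⟪x - q, x - q⟫ :=
    real_inner_self_pos.2 (sub_ne_zero.2 fun h => hx (h ▸ hq))
  rw [inner_sub_right] at hobtuse hgap
  linarith

variable (K : Submodule ℝ E) [K.HasOrthogonalProjection]

theorem Submodule.inner_starProjection_right_of_mem {d : E} (hd : d ∈ K) (x : E) :
    ⟪d, K.starProjection x⟫ = ⟪d, x⟫ := by
  rw [← K.inner_starProjection_left_eq_right, K.starProjection_eq_self_iff.2 hd]

theorem exists_norm_sub_le_of_starProjection_mem_convexHull {s : Set E} {c e t : E}
    (hc : c ∈ K) (ht : t ∈ K) (hs : ∀ p ∈ s, ‖p - c‖ ≤ ‖e - c‖)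
    (he : K.starProjection e ∈ convexHull ℝ (K.starProjection '' s)) :
    ∃ p ∈ s, ‖t - p‖ ≤ ‖t - e‖ := by
  obtain ⟨_, ⟨p, hp, rfl⟩, hle⟩ :=
    ((innerₗ E (t - c)).convexOn convex_univ).exists_ge_of_mem_convexHull (subset_univ _) he
  have htc := K.sub_mem ht hc
  simp only [innerₗ_apply_apply, K.inner_starProjection_right_of_mem htc] at hle
  refine ⟨p, hp, (sq_le_sq₀ (norm_nonneg _) (norm_nonneg _)).1 ?_⟩
  have hmargin := norm_sub_sq_sub_norm_sub_sq t c p e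
  have hpe := pow_le_pow_left₀ (norm_nonneg _) (hs p hp) 2
  rw [inner_sub_right] at hmargin
  linarith

theorem exists_mem_forall_norm_sub_lt_of_starProjection_notMem_convexHull {s : Set E}
    (hs : s.Finite) {e : E} (he : K.starProjection e ∉ convexHull ℝ (K.starProjection '' s)) :
    ∃ t ∈ K, ∀ p ∈ s, ‖t - e‖ < ‖t - p‖ := by
  rcases s.eq_empty_or_nonempty with rfl | hsn
  · exact ⟨0, K.zero_mem, by simp⟩
  obtain ⟨q, hq, hsep⟩ := (convex_convexHull ℝ _).exists_mem_forall_inner_lt_of_notMem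
    ((hs.image _).isCompact_convexHull ℝ).isComplete ((hsn.image _).convexHull) he
  set d := K.starProjection e - q
  have hdK : d ∈ K := K.sub_mem (K.starProjection_apply_mem e)
    ((convexHull_min (image_subset_iff.2 fun x _ => K.starProjection_apply_mem x)
      K.convex) hq)
  have hslope : ∀ p ∈ s, 0 < ⟪d, e - p⟫ := fun p hp => by
    have := hsep _ (subset_convexHull ℝ _ (mem_image_of_mem _ hp))
    rw [inner_sub_right, ← K.inner_starProjection_right_of_mem hdK e,
      ← K.inner_starProjection_right_of_mem hdK p]
    linarith
  have hfar : ∀ᶠ σ : ℝ in atTop, ∀ p ∈ s, ‖σ • d - e‖ < ‖σ • d - p‖ := by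
    refine (eventually_all_finite hs).2 fun p hp => ?_
    have hlim :
        Tendsto (fun σ : ℝ => ‖p‖ ^ 2 - ‖e‖ ^ 2 + σ * (2 * ⟪d, e - p⟫)) atTop atTop :=
      tendsto_atTop_add_const_left _ _ (tendsto_id.atTop_mul_const (by linarith [hslope p hp]))
    filter_upwards [hlim.eventually_gt_atTop 0] with σ hσ
    have hmargin := norm_sub_sq_sub_norm_sub_sq (σ • d) 0 p e
    rw [sub_zero, sub_zero, sub_zero, real_inner_smul_left] at hmargin
    exact (sq_lt_sq₀ (norm_nonneg _) (norm_nonneg _)).1 (by linarith)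
  obtain ⟨σ, hσ⟩ := hfar.exists
  exact ⟨σ • d, K.smul_mem σ hdK, hσ⟩

theorem exists_mem_forall_norm_sub_lt_iff {s : Set E} (hs : s.Finite) {c e : E} {r : ℝ}
    (hc : c ∈ K) (hr : ∀ p ∈ s, ‖p - c‖ = r) :
    (∃ t ∈ K, ∀ p ∈ s, ‖t - e‖ < ‖t - p‖) ↔
      ‖e - c‖ < r ∨ K.starProjection e ∉ convexHull ℝ (K.starProjection '' s) := by
  constructor
  · rintro ⟨t, ht, hlt⟩
    by_contra! ⟨hrec, he⟩
    obtain ⟨p, hp, hle⟩ := exists_norm_sub_le_of_starProjection_mem_convexHull K hc ht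
      (fun p hp => (hr p hp).trans_le hrec) he
    exact (hlt p hp).not_ge hle
  · rintro (hec | he)
    · refine ⟨c, hc, fun p hp => ?_⟩
      rwa [norm_sub_rev c e, norm_sub_rev c p, hr p hp]
    · exact exists_mem_forall_norm_sub_lt_of_starProjection_notMem_convexHull K hs he

end

def targetPlane : Submodule ℝ (EuclideanSpace ℝ (Fin 3)) :=
  LinearMap.ker (EuclideanSpace.projₗ 2)

theorem mem_targetPlane {z : EuclideanSpace ℝ (Fin 3)} : z ∈ targetPlane ↔ z 2 = 0 := Iff.rfl

theorem starProjection_targetPlane (z : EuclideanSpace ℝ (Fin 3)) :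
    targetPlane.starProjection z = projT z := by
  refine targetPlane.eq_starProjection_of_mem_of_inner_eq_zero rfl fun w hw => ?_
  rw [mem_targetPlane] at hw
  simp [PiLp.inner_apply, Fin.sum_univ_three, hw, projT, mk3]

theorem noncollinear_three_pursuer_evader_winning_general (p : Fin 3 → EuclideanSpace ℝ (Fin 3))
    (c : EuclideanSpace ℝ (Fin 3)) (hcT : c 2 = 0)
    (hc1 : ‖c - p 0‖ = ‖c - p 1‖) (hc2 : ‖c - p 1‖ = ‖c - p 2‖)
    (e : EuclideanSpace ℝ (Fin 3)) :
    (∃ t : EuclideanSpace ℝ (Fin 3), t 2 = 0 ∧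
        ‖t - e‖ < min ‖t - p 0‖ (min ‖t - p 1‖ ‖t - p 2‖)) ↔
    (‖e - c‖ < ‖p 0 - c‖ ∨
      projT e ∉ convexHull ℝ ({projT (p 0), projT (p 1), projT (p 2)} :
        Set (EuclideanSpace ℝ (Fin 3)))) := by
  have hr : ∀ q ∈ ({p 0, p 1, p 2} : Set (EuclideanSpace ℝ (Fin 3))),
      ‖q - c‖ = ‖p 0 - c‖ := by
    simp only [forall_mem_insert, forall_eq, mem_singleton_iff, norm_sub_rev _ c, ← hc1, ← hc2,
      and_self]
  have key := exists_mem_forall_norm_sub_lt_iff targetPlane (toFinite _)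
    (mem_targetPlane.2 hcT) hr (e := e)
  simpa only [image_insert_eq, image_singleton, starProjection_targetPlane, forall_mem_insert,
    forall_eq, mem_singleton_iff, mem_targetPlane, lt_min_iff, exists_prop] using key

/-- Theorem 3 (evader winning subspace): for three jointly active pursuers with
noncollinear projections, the evader winning subspace is the complement in the play
half-space of the barrier and the pursuer winning subspace: the evader wins iff it lies
strictly inside the sphere of radius `r = ‖p₁ − c‖` centered at the equidistant point `c`,
or its projection lies outside the triangle `S` spanned by the pursuers' projections. -/
theorem noncollinear_three_pursuer_evader_winning (p : Fin 3 → EuclideanSpace ℝ (Fin 3))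
    (hactive : JointlyActive p)
    (hncol : ¬Collinear ℝ ({projT (p 0), projT (p 1), projT (p 2)} :
      Set (EuclideanSpace ℝ (Fin 3))))
    (c : EuclideanSpace ℝ (Fin 3)) (hcT : c 2 = 0)
    (hc1 : ‖c - p 0‖ = ‖c - p 1‖) (hc2 : ‖c - p 1‖ = ‖c - p 2‖)
    (e : EuclideanSpace ℝ (Fin 3)) (he : e 2 > 0) (hne : ∀ m, e ≠ p m) :
    (∃ t : EuclideanSpace ℝ (Fin 3), t 2 = 0 ∧
        ‖t - e‖ < min ‖t - p 0‖ (min ‖t - p 1‖ ‖t - p 2‖)) ↔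
    (‖e - c‖ < ‖p 0 - c‖ ∨
      projT e ∉ convexHull ℝ ({projT (p 0), projT (p 1), projT (p 2)} :
        Set (EuclideanSpace ℝ (Fin 3)))) :=
  noncollinear_three_pursuer_evader_winning_general p c hcT hc1 hc2 e
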